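/- (Fano's inequality) Let Y and Ŷ be discrete random variables taking values in a finite set of size C, and let P_E = P(Ŷ ≠ Y). Then H(Y | Ŷ) ≤ H_b(P_E) + P_E · log(C − 1), where H_b(p) = −p log p − (1−p) log(1−p) is the binary entropy function. -/

import Mathlib

open Finset

noncomputable section

variable {Ω : Type} [Fintype Ω]

/-- `p` is a probability mass function on the finite sample space `Ω`. -/
def IsPMF (p : Ω → ℝ) : Prop := (∀ ω, 0 ≤ p ω) ∧ ∑ ω, p ω = 1

/-- Probability of an event under `p`. -/
def probEvent (p : Ω → ℝ) (A : Ω → Prop) [DecidablePred A] : ℝ :=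
  ∑ ω, if A ω then p ω else 0

/-- Distribution (pmf) of a discrete random variable `Y`. -/
def dist (p : Ω → ℝ) {S : Type} [Fintype S] [DecidableEq S] (Y : Ω → S) (y : S) : ℝ :=
  ∑ ω, if Y ω = y then p ω else 0

/-- Shannon entropy of `Y` (natural logarithm; `Real.log 0 = 0` gives `0 log 0 = 0`). -/
def entropy (p : Ω → ℝ) {S : Type} [Fintype S] [DecidableEq S] (Y : Ω → S) : ℝ :=
  -∑ y, dist p Y y * Real.log (dist p Y y)

/-- Conditional entropy `H(Y | X) = H(Y, X) - H(X)`. -/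
def condEntropy (p : Ω → ℝ) {S T : Type} [Fintype S] [DecidableEq S] [Fintype T] [DecidableEq T]
    (Y : Ω → S) (X : Ω → T) : ℝ :=
  entropy p (fun ω => (Y ω, X ω)) - entropy p X

/-- Mutual information `I(Y ; X) = H(Y) - H(Y | X)`. -/
def mutualInfo (p : Ω → ℝ) {S T : Type} [Fintype S] [DecidableEq S] [Fintype T] [DecidableEq T]
    (Y : Ω → S) (X : Ω → T) : ℝ :=
  entropy p Y - condEntropy p Y X

/-- Conditional mutual information `I(Y ; X | Z) = H(Y | Z) - H(Y | X, Z)`. -/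
def condMutualInfo (p : Ω → ℝ) {S T U : Type} [Fintype S] [DecidableEq S] [Fintype T]
    [DecidableEq T] [Fintype U] [DecidableEq U] (Y : Ω → S) (X : Ω → T) (Z : Ω → U) : ℝ :=
  condEntropy p Y Z - condEntropy p Y (fun ω => (X ω, Z ω))

/-- `Y` and `Z` are conditionally independent given `X` (multiplied-out form, valid also when
`P(X = x) = 0`). -/
def CondIndepGiven (p : Ω → ℝ) {S T U : Type} [Fintype S] [DecidableEq S] [Fintype U]
    [DecidableEq U] [Fintype T] [DecidableEq T] (Y : Ω → S) (Z : Ω → U) (X : Ω → T) : Prop :=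
  ∀ y z x, dist p (fun ω => (Y ω, Z ω, X ω)) (y, z, x) * dist p X x =
    dist p (fun ω => (Y ω, X ω)) (y, x) * dist p (fun ω => (Z ω, X ω)) (z, x)

/-- `Y` is uniformly distributed on its (finite) value set. -/
def IsUniform (p : Ω → ℝ) {S : Type} [Fintype S] [DecidableEq S] (Y : Ω → S) : Prop :=
  ∀ y, dist p Y y = 1 / (Fintype.card S : ℝ)

/-- Binary entropy function `H_b(q) = -q log q - (1-q) log (1-q)`. -/
def binEntropy (q : ℝ) : ℝ := -(q * Real.log q) - (1 - q) * Real.log (1 - q)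

/-!
Let `r` be the joint pmf of `(Y, Ŷ)`, `m` the marginal of `Ŷ` and `e = P_E`. The kernel
`q(y | ŷ) = 1 - e` for `y = ŷ` and `e / (C - 1)` otherwise has mass at most `1` for each `ŷ`, so
`m · q` has total mass at most `1`, and Gibbs' inequality (from `log x ≤ x - 1`) comparing `r` with
`m · q` gives `H(Y | Ŷ) ≤ -∑ r log q`. The right-hand side is exactly `H_b(e) + e log (C - 1)`.
-/

open Real hiding binEntropy

theorem sum_mul_log_le_sum_mul_log_self {α : Type*} [Fintype α] {a b : α → ℝ}
    (ha : ∀ z, 0 ≤ a z) (hb : ∀ z, 0 ≤ b z) (hab : ∀ z, 0 < a z → 0 < b z) (hsum : ∑ z, b z ≤ ∑ z, a z) :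
    ∑ z, a z * log (b z) ≤ ∑ z, a z * log (a z) := by
  have hkey : ∀ z, a z * log (b z) - a z * log (a z) ≤ b z - a z := by
    intro z
    rcases (ha z).eq_or_lt with h | h
    · simp [← h, hb z]
    · have hlog := log_le_sub_one_of_pos (div_pos (hab z h) h)
      rw [log_div (hab z h).ne' h.ne'] at hlog
      calc a z * log (b z) - a z * log (a z) = a z * (log (b z) - log (a z)) := by ring
        _ ≤ a z * (b z / a z - 1) := mul_le_mul_of_nonneg_left hlog h.le
        _ = b z - a z := by field_simp
  have hsum_key := sum_le_sum fun z (_ : z ∈ univ) => hkey z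
  simp only [sum_sub_distrib] at hsum_key
  linarith

theorem sum_mul_log_marginal_sub_le {β γ : Type*} [Fintype β] [Fintype γ] {r q : β × γ → ℝ}
    (hr : ∀ z, 0 ≤ r z) (hq : ∀ z, 0 ≤ q z) (hrq : ∀ z, 0 < r z → 0 < q z)
    (hq1 : ∀ t, ∑ y, q (y, t) ≤ 1) :
    ∑ z, r z * (log (∑ y, r (y, z.2)) - log (r z)) ≤ -∑ z, r z * log (q z) := by
  set m : γ → ℝ := fun t => ∑ y, r (y, t)
  have hm_pos : ∀ z, 0 < r z → 0 < m z.2 := fun z hz =>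
    hz.trans_le (single_le_sum (f := fun y => r (y, z.2)) (fun y _ => hr _) (mem_univ z.1))
  have hsum : ∑ z, m z.2 * q z ≤ ∑ z, r z := by
    calc ∑ z, m z.2 * q z = ∑ t, m t * ∑ y, q (y, t) := by
          rw [Fintype.sum_prod_type_right]; simp only [mul_sum]
      _ ≤ ∑ t, m t := sum_le_sum fun t _ =>
          mul_le_of_le_one_right (sum_nonneg fun y _ => hr _) (hq1 t)
      _ = ∑ z, r z := (Fintype.sum_prod_type_right r).symm
  have hgibbs : ∑ z, r z * log (m z.2 * q z) ≤ ∑ z, r z * log (r z) :=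
    sum_mul_log_le_sum_mul_log_self hr (fun z => mul_nonneg (sum_nonneg fun y _ => hr _) (hq z))
      (fun z hz => mul_pos (hm_pos z hz) (hrq z hz)) hsum
  have hsplit : ∀ z, r z * log (m z.2 * q z) = r z * log (m z.2) + r z * log (q z) := by
    intro z
    rcases (hr z).eq_or_lt with h | h
    · simp [← h]
    · rw [log_mul (hm_pos z h).ne' (hrq z h).ne', mul_add]
  simp only [hsplit, sum_add_distrib] at hgibbs
  simp only [mul_sub, sum_sub_distrib]
  linarith

theorem sum_mul_log_marginal_sub_le_binEntropy {S : Type*} [Fintype S] [DecidableEq S]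
    {r : S × S → ℝ} (hr : ∀ z, 0 ≤ r z) (hr1 : ∑ z, r z = 1) :
    ∑ z, r z * (log (∑ y, r (y, z.2)) - log (r z)) ≤
      binEntropy (∑ z with z.2 ≠ z.1, r z) +
        (∑ z with z.2 ≠ z.1, r z) * log ((Fintype.card S : ℝ) - 1) := by
  set e := ∑ z with z.2 ≠ z.1, r z
  set c : ℝ := (Fintype.card S : ℝ) - 1 with hc_def
  have he : 0 ≤ e := sum_nonneg fun z _ => hr z
  have hdiag : ∑ z with z.2 = z.1, r z = 1 - e := by
    rw [← hr1, ← sum_filter_add_sum_filter_not univ fun z : S × S => z.2 = z.1]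
    ring
  have hle_diag : ∀ z : S × S, z.2 = z.1 → r z ≤ 1 - e := fun z hz =>
    hdiag ▸ single_le_sum (fun z _ => hr z) (mem_filter.2 ⟨mem_univ z, hz⟩)
  have hle_off : ∀ z : S × S, z.2 ≠ z.1 → r z ≤ e := fun z hz =>
    single_le_sum (fun z _ => hr z) (mem_filter.2 ⟨mem_univ z, hz⟩)
  have hc : ∀ z : S × S, z.2 ≠ z.1 → 1 ≤ c := fun z hz => by
    have : (2 : ℝ) ≤ Fintype.card S := by
      exact_mod_cast Fintype.one_lt_card_iff.2 ⟨z.2, z.1, hz⟩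
    linarith
  set q : S × S → ℝ := fun z => if z.2 = z.1 then 1 - e else e / c
  have hq : ∀ z, 0 ≤ q z := by
    intro z
    by_cases hz : z.2 = z.1
    · simpa [q, hz] using (hr z).trans (hle_diag z hz)
    · simpa [q, hz] using div_nonneg he (zero_le_one.trans (hc z hz))
  have hrq : ∀ z, 0 < r z → 0 < q z := by
    intro z hrz
    by_cases hz : z.2 = z.1
    · simpa [q, hz] using hrz.trans_le (hle_diag z hz)
    · simpa [q, hz] using div_pos (hrz.trans_le (hle_off z hz)) (zero_lt_one.trans_le (hc z hz))
  have hq1 : ∀ t, ∑ y, q (y, t) ≤ 1 := by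
    intro t
    have hsum : ∑ y, q (y, t) = (1 - e) + c * (e / c) := by
      have hq_eq : ∀ y, q (y, t) = e / c + if t = y then 1 - e - e / c else 0 := fun y => by
        by_cases h : t = y <;> simp [q, h, eq_comm]
      simp only [hq_eq, sum_add_distrib, sum_ite_eq, mem_univ, if_true, sum_const, card_univ,
        nsmul_eq_mul, hc_def]
      ring
    -- `c = 0` exactly when `S` is a singleton; then `e / c` is the junk value `0`.
    have hce : c * (e / c) ≤ e := by
      rcases eq_or_ne c 0 with h0 | h0
      · simpa [h0] using he
      · rw [mul_div_cancel₀ _ h0]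
    linarith
  have hcross : -∑ z, r z * log (q z) = binEntropy e + e * log c := by
    have hsplit : ∑ z, r z * log (q z) = (1 - e) * log (1 - e) + e * log (e / c) := by
      rw [← sum_filter_add_sum_filter_not univ fun z : S × S => z.2 = z.1, ← hdiag, sum_mul,
        sum_mul]
      congr 1 <;> refine sum_congr rfl fun z hz => ?_ <;> simp_all [q]
    have hlog : e * log (e / c) = e * log e - e * log c := by
      rcases eq_or_ne e 0 with h0 | h0
      · simp [h0]
      obtain ⟨z, hz, -⟩ := exists_ne_zero_of_sum_ne_zero h0
      rw [log_div h0 (zero_lt_one.trans_le (hc z (mem_filter.1 hz).2)).ne', mul_sub]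
    rw [hsplit, hlog, binEntropy]
    ring
  exact (sum_mul_log_marginal_sub_le hr hq hrq hq1).trans_eq hcross

section Distribution

variable {S T : Type} [Fintype S] [DecidableEq S] [Fintype T] [DecidableEq T]

theorem dist_apply_nonneg {p : Ω → ℝ} (hp : ∀ ω, 0 ≤ p ω) (Y : Ω → S) (y : S) :
    0 ≤ _root_.dist p Y y :=
  sum_nonneg fun ω _ => by split_ifs <;> simp [hp ω]

theorem sum_dist (p : Ω → ℝ) (Y : Ω → S) : ∑ y, _root_.dist p Y y = ∑ ω, p ω := by
  simp only [_root_.dist]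
  rw [sum_comm]
  simp

theorem sum_dist_pair_left (p : Ω → ℝ) (Y : Ω → S) (X : Ω → T) (t : T) :
    ∑ y, _root_.dist p (fun ω => (Y ω, X ω)) (y, t) = _root_.dist p X t := by
  simp only [_root_.dist, Prod.ext_iff, ite_and]
  rw [sum_comm]
  simp

theorem probEvent_comp_eq_sum (p : Ω → ℝ) (X : Ω → S) (P : S → Prop) [DecidablePred P] :
    probEvent p (fun ω => P (X ω)) = ∑ x with P x, _root_.dist p X x := by
  simp only [probEvent, _root_.dist]
  rw [sum_comm]
  simp

theorem condEntropy_eq_sum (p : Ω → ℝ) (Y : Ω → S) (X : Ω → T) :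
    condEntropy p Y X =
      ∑ z, _root_.dist p (fun ω => (Y ω, X ω)) z *
        (log (∑ y, _root_.dist p (fun ω => (Y ω, X ω)) (y, z.2)) -
          log (_root_.dist p (fun ω => (Y ω, X ω)) z)) := by
  simp only [condEntropy, entropy, ← sum_dist_pair_left p Y X, sum_mul, mul_sub, sum_sub_distrib,
    Fintype.sum_prod_type_right]
  ring

end Distribution

/-- Fano's inequality. -/
theorem fano_inequality {S : Type} [Fintype S] [DecidableEq S]
    (p : Ω → ℝ) (hp : IsPMF p) (C : ℕ) (hcard : Fintype.card S = C)
    (Y Yhat : Ω → S) :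
    condEntropy p Y Yhat ≤ binEntropy (probEvent p (fun ω => Yhat ω ≠ Y ω)) +
      probEvent p (fun ω => Yhat ω ≠ Y ω) * Real.log ((C : ℝ) - 1) := by
  subst hcard
  rw [condEntropy_eq_sum, probEvent_comp_eq_sum p (fun ω => (Y ω, Yhat ω)) fun z => z.2 ≠ z.1]
  exact sum_mul_log_marginal_sub_le_binEntropy (dist_apply_nonneg hp.1 _)
    ((sum_dist p _).trans hp.2)
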